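/- Let P = ⟨P_i⟩_{i<n} be a dynamic logic program such that ρ(P) is acyclic w.r.t. a level mapping ℓ, let ⟨J_k⟩_{k≥0} be the chain defined from ℓ and J = ⋃_{k≥0} J_k. Then for every literal L with ℓ(L) = k₀ and every k ≥ k₀: J ⊨ L if and only if J_k ⊨ L. -/
import Mathlib


namespace RuleUpdates

/-- Objective literal: an atom (a natural number) or its strong negation. -/
inductive OLit where
  | pos : ℕ → OLit
  | neg : ℕ → OLit
deriving DecidableEq

/-- Strong negation on objective literals (with ¬¬p identified with p). -/
def OLit.compl : OLit → OLit
  | .pos p => .neg p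
  | .neg p => .pos p

/-- Literal: an objective literal or its default negation (not not l = l). -/
inductive Lit where
  | obj : OLit → Lit
  | ndef : OLit → Lit
deriving DecidableEq

/-- Extended rule: a head literal and a finite set of body literals. -/
structure Rule where
  head : Lit
  body : Finset Lit

/-- Interpretation: a consistent set of objective literals. -/
def Interp (J : Set OLit) : Prop :=
  ∀ p : ℕ, ¬ (OLit.pos p ∈ J ∧ OLit.neg p ∈ J)

/-- Satisfaction of a literal. -/
def satLit (J : Set OLit) : Lit → Prop
  | .obj l => l ∈ J
  | .ndef l => l ∉ J

/-- Satisfaction of a set of body literals. -/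
def satBody (J : Set OLit) (B : Finset Lit) : Prop :=
  ∀ L ∈ B, satLit J L

/-- Satisfaction of a rule. -/
def satRule (J : Set OLit) (π : Rule) : Prop :=
  satBody J π.body → satLit J π.head

/-- J is a model of a program. -/
def isModel (J : Set OLit) (P : Set Rule) : Prop :=
  ∀ π ∈ P, satRule J π

/-- J* = J ∪ { not l | l ∈ ℒ ∖ J }, as a set of literals. -/
def star (J : Set OLit) : Set Lit :=
  {L | ∃ l : OLit, (L = Lit.obj l ∧ l ∈ J) ∨ (L = Lit.ndef l ∧ l ∉ J)}

/-- def(J) = { (not l.) | l ∈ ℒ ∖ J }. -/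
def defFacts (J : Set OLit) : Set Rule :=
  {π | ∃ l : OLit, l ∉ J ∧ π = ⟨Lit.ndef l, ∅⟩}

/-- S (a set of literals) is closed under program P, all literals
treated as distinct propositional atoms. -/
def closedUnder (P : Set Rule) (S : Set Lit) : Prop :=
  ∀ π ∈ P, (π.body : Set Lit) ⊆ S → π.head ∈ S

/-- least(P): the least model of P when all literals are treated as
distinct propositional atoms. -/
def leastModel (P : Set Rule) : Set Lit :=
  ⋂₀ {S | closedUnder P S}

/-- Stable model of an extended program: J* = least(P ∪ def(J)). -/
def isStableModel (P : Set Rule) (J : Set OLit) : Prop :=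
  Interp J ∧ star J = leastModel (P ∪ defFacts J)

/-- Level of a literal, with ℓ(not l) = ℓ(l). -/
def litLevel (ℓ : OLit → ℕ) : Lit → ℕ
  | .obj l => ℓ l
  | .ndef l => ℓ l

/-- ℓ↑(S): the maximal level of a literal in the finite set S. -/
def supLevel (ℓ : OLit → ℕ) (S : Finset Lit) : ℕ :=
  S.sup (litLevel ℓ)

/-- ℓ↓(S): the minimal level of a literal in the finite set S. -/
noncomputable def infLevel (ℓ : OLit → ℕ) (S : Finset Lit) : ℕ :=
  sInf (litLevel ℓ '' (S : Set Lit))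

/-- Well-supported model of an extended program w.r.t. a level mapping ℓ. -/
def isWSModelWith (P : Set Rule) (J : Set OLit) (ℓ : OLit → ℕ) : Prop :=
  isModel J P ∧
    ∀ l ∈ J, ∃ π ∈ P, π.head = Lit.obj l ∧ satBody J π.body ∧
      supLevel ℓ π.body < ℓ l

/-- Well-supported model of an extended program. -/
def isWSModel (P : Set Rule) (J : Set OLit) : Prop :=
  Interp J ∧ ∃ ℓ : OLit → ℕ, isWSModelWith P J ℓ

/-- con(L): the literals in conflict with L. -/
def con : Lit → Finset Lit
  | .obj l => {Lit.ndef l, Lit.obj l.compl}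
  | .ndef l => {Lit.obj l}

/-- ρ(P): all rules occurring in the components of the DLP. -/
def allRules {n : ℕ} (P : Fin n → Set Rule) : Set Rule :=
  {π | ∃ i : Fin n, π ∈ P i}

/-- The rule π ∈ P i is rejected w.r.t. the set of literals S:
some later σ with conflicting head has its body included in S. -/
def rejIn {n : ℕ} (P : Fin n → Set Rule) (S : Set Lit) (i : Fin n) (π : Rule) : Prop :=
  ∃ j : Fin n, i < j ∧ ∃ σ ∈ P j, σ.head ∈ con π.head ∧ (σ.body : Set Lit) ⊆ S

/-- rem(P, S) = ρ(P) ∖ rej(P, S), as a set of component-indexed rules. -/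
def remSet {n : ℕ} (P : Fin n → Set Rule) (S : Set Lit) : Set (Fin n × Rule) :=
  {x | x.2 ∈ P x.1 ∧ ¬ rejIn P S x.1 x.2}

/-- The operator T_{P,J}. -/
def TOp {n : ℕ} (P : Fin n → Set Rule) (J : Set OLit) (S : Set Lit) : Set Lit :=
  {L | ((∃ x ∈ remSet P (star J), x.2.head = L ∧ (x.2.body : Set Lit) ⊆ S) ∨
        (∃ l : OLit, l ∉ J ∧ L = Lit.ndef l)) ∧
       ¬ ∃ σ ∈ remSet P S, σ.2.head ∈ con L ∧ (σ.2.body : Set Lit) ⊆ star J}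

/-- Iterates of T_{P,J} starting from ∅. -/
def TIter {n : ℕ} (P : Fin n → Set Rule) (J : Set OLit) : ℕ → Set Lit
  | 0 => ∅
  | k + 1 => TOp P J (TIter P J k)

/-- Extended RD-model of a DLP: J* = ⋃_{k≥0} T_{P,J}^k(∅). -/
def isExtRD {n : ℕ} (P : Fin n → Set Rule) (J : Set OLit) : Prop :=
  Interp J ∧ star J = ⋃ k : ℕ, TIter P J k

/-- rej^ℓ(P, J): π ∈ P i is rejected w.r.t. J and the level mapping ℓ. -/
def rejLvl {n : ℕ} (P : Fin n → Set Rule) (J : Set OLit) (ℓ : OLit → ℕ)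
    (i : Fin n) (π : Rule) : Prop :=
  ∃ j : Fin n, i < j ∧ ∃ σ ∈ P j, σ.head ∈ con π.head ∧ satBody J σ.body ∧
    supLevel ℓ σ.body < infLevel ℓ (con π.head)

/-- Extended WS-model of a DLP. -/
def isExtWS {n : ℕ} (P : Fin n → Set Rule) (J : Set OLit) : Prop :=
  Interp J ∧ ∃ ℓ : OLit → ℕ,
    (∀ i : Fin n, ∀ π ∈ P i, ¬ rejLvl P J ℓ i π → satRule J π) ∧
    (∀ l ∈ J, ∃ x ∈ remSet P (star J), x.2.head = Lit.obj l ∧ satBody J x.2.body ∧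
      supLevel ℓ x.2.body < ℓ l)

/-- A program is acyclic w.r.t. a level mapping ℓ. -/
def acyclicWrt (Q : Set Rule) (ℓ : OLit → ℕ) : Prop :=
  (∀ l : OLit, ℓ l = ℓ l.compl) ∧ ∀ π ∈ Q, supLevel ℓ π.body < litLevel ℓ π.head

/-- The chain ⟨J_k⟩ defined from a level mapping ℓ over a DLP. -/
def chain {n : ℕ} (P : Fin n → Set Rule) (ℓ : OLit → ℕ) : ℕ → Set OLit
  | 0 => ∅
  | k + 1 =>
    {l | ∃ i : Fin n, ∃ π ∈ P i, π.head = Lit.obj l ∧ ℓ l ≤ k + 1 ∧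
      satBody (chain P ℓ k) π.body ∧
      ¬ ∃ j : Fin n, i < j ∧ ∃ σ ∈ P j, σ.head ∈ con π.head ∧
        satBody (chain P ℓ k) σ.body}

lemma mem_chain_succ_iff {n : ℕ} (P : Fin n → Set Rule) (ℓ : OLit → ℕ) (s : ℕ) (l : OLit) :
    l ∈ chain P ℓ (s + 1) ↔
      ∃ i : Fin n, ∃ π ∈ P i, π.head = Lit.obj l ∧ ℓ l ≤ s + 1 ∧
        satBody (chain P ℓ s) π.body ∧
        ¬ ∃ j : Fin n, i < j ∧ ∃ σ ∈ P j, σ.head ∈ con π.head ∧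
          satBody (chain P ℓ s) σ.body := Iff.rfl

lemma mem_chain_level {n : ℕ} (P : Fin n → Set Rule) (ℓ : OLit → ℕ) :
    ∀ m l, l ∈ chain P ℓ m → ℓ l ≤ m := by
  intro m l h
  cases m with
  | zero => exact absurd h (by simp [chain])
  | succ s =>
    obtain ⟨i, π, hπ, hh, hl, _⟩ := (mem_chain_succ_iff P ℓ s l).mp h
    exact hl

lemma chain_mem_of {n : ℕ} (P : Fin n → Set Rule) (ℓ : OLit → ℕ)
    (hacy : acyclicWrt (allRules P) ℓ) (k s t : ℕ) (l : OLit)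
    (hlt : ℓ l ≤ t + 1) (hlk : ℓ l ≤ k + 1)
    (hsat : ∀ B : Finset Lit, supLevel ℓ B ≤ k →
      (satBody (chain P ℓ s) B → satBody (chain P ℓ t) B))
    (hsat' : ∀ B : Finset Lit, supLevel ℓ B ≤ k →
      (satBody (chain P ℓ t) B → satBody (chain P ℓ s) B))
    (h : l ∈ chain P ℓ (s + 1)) : l ∈ chain P ℓ (t + 1) := by
  obtain ⟨i, π, hπ, hhead, _, hbody, hnrej⟩ := (mem_chain_succ_iff P ℓ s l).mp h
  have hπall : π ∈ allRules P := ⟨i, hπ⟩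
  have hbl : supLevel ℓ π.body ≤ k := by
    have h2 := hacy.2 π hπall
    rw [hhead] at h2
    simp only [litLevel] at h2
    omega
  refine (mem_chain_succ_iff P ℓ t l).mpr ⟨i, π, hπ, hhead, hlt, hsat _ hbl hbody, ?_⟩
  rintro ⟨j, hij, σ, hσ, hcon, hσbody⟩
  have hσall : σ ∈ allRules P := ⟨j, hσ⟩
  have hσl : supLevel ℓ σ.body ≤ k := by
    have h2 := hacy.2 σ hσall
    have hcon' := hcon
    rw [hhead] at hcon'
    simp only [con, Finset.mem_insert, Finset.mem_singleton] at hcon'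
    rcases hcon' with hc | hc <;> rw [hc] at h2 <;> simp only [litLevel] at h2
    · omega
    · rw [← hacy.1 l] at h2; omega
  exact hnrej ⟨j, hij, σ, hσ, hcon, hsat' _ hσl hσbody⟩

lemma chain_agree {n : ℕ} (P : Fin n → Set Rule) (ℓ : OLit → ℕ)
    (hacy : acyclicWrt (allRules P) ℓ) :
    ∀ k m, k ≤ m → ∀ l : OLit, ℓ l ≤ k →
      (l ∈ chain P ℓ m ↔ l ∈ chain P ℓ k) := by
  intro k
  induction k with
  | zero =>
    intro m _ l hl
    have hnot : ∀ m', l ∉ chain P ℓ m' := by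
      intro m' hmem
      cases m' with
      | zero => simp [chain] at hmem
      | succ s =>
        obtain ⟨i, π, hπ, hhead, _, _, _⟩ := (mem_chain_succ_iff P ℓ s l).mp hmem
        have h2 := hacy.2 π ⟨i, hπ⟩
        rw [hhead] at h2
        simp only [litLevel] at h2
        omega
    simp [hnot m, hnot 0]
  | succ k ih =>
    intro m hm l hl
    obtain ⟨m', rfl⟩ : ∃ m', m = m' + 1 := ⟨m - 1, by omega⟩
    have hm' : k ≤ m' := by omega
    have hsat : ∀ B : Finset Lit, supLevel ℓ B ≤ k →
        (satBody (chain P ℓ m') B ↔ satBody (chain P ℓ k) B) := by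
      intro B hB
      unfold satBody
      refine forall₂_congr fun L hL => ?_
      have hlev : litLevel ℓ L ≤ k := (Finset.le_sup hL).trans hB
      cases L with
      | obj l' => exact ih m' hm' l' hlev
      | ndef l' => exact not_congr (ih m' hm' l' hlev)
    constructor
    · exact chain_mem_of P ℓ hacy k m' k l hl hl
        (fun B hB => (hsat B hB).mp) (fun B hB => (hsat B hB).mpr)
    · exact chain_mem_of P ℓ hacy k k m' l (by omega) hl
        (fun B hB => (hsat B hB).mpr) (fun B hB => (hsat B hB).mp)

/-- for an acyclic DLP, for every literal L with ℓ(L) = k₀ and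
every k ≥ k₀, J ⊨ L iff J_k ⊨ L, where J = ⋃_{k≥0} J_k. -/
theorem chain_sat_stabilises (n : ℕ) (P : Fin n → Set Rule) (ℓ : OLit → ℕ)
    (hacy : acyclicWrt (allRules P) ℓ)
    (L : Lit) (k₀ k : ℕ) (hL : litLevel ℓ L = k₀) (hk : k₀ ≤ k) :
    satLit (⋃ m : ℕ, chain P ℓ m) L ↔ satLit (chain P ℓ k) L := by
  have key := chain_agree P ℓ hacy
  cases L with
  | obj l =>
    have hl : ℓ l = k₀ := hL
    simp only [satLit, Set.mem_iUnion]
    constructor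
    · rintro ⟨m, hm⟩
      have hlev := mem_chain_level P ℓ m l hm
      have h1 : l ∈ chain P ℓ k₀ := (key k₀ m (by omega) l (by omega)).mp hm
      exact (key k₀ k (by omega) l (by omega)).mpr h1
    · intro h; exact ⟨k, h⟩
  | ndef l =>
    have hl : ℓ l = k₀ := hL
    simp only [satLit, Set.mem_iUnion, not_exists]
    constructor
    · intro h; exact h k
    · intro h m hm
      have hlev := mem_chain_level P ℓ m l hm
      have h1 : l ∈ chain P ℓ k₀ := (key k₀ m (by omega) l (by omega)).mp hm
      exact h ((key k₀ k (by omega) l (by omega)).mpr h1)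

end RuleUpdates
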